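/- arXiv:0909.2441 — 2 statements merged into one kernel-verified Lean document; each statement's English description precedes it below -/
import Mathlib

section
/- Let k be an algebraically closed field of characteristic 2, V a finite-dimensional symplectic k-vector space of dimension 2r, and Q a quadratic form on V whose associated endomorphism A = A_Q (defined by Q(x+y)−Q(x)−Q(y) = (Ax,y)) is nilpotent. Then there exists a basis (e_i) of V indexed by the odd integers i with −2r+1 ≤ i ≤ 2r−1, satisfying (e_i, e_j) = δ_{i+j,0}, such that A e_i lies in the span of {e_j : j > i} for every index i, and Q(e_i) = 0 for all i ≥ 0. -/
/-!
Induction on `r`. The form `(x, y) ↦ (Ax, y)` is the polar form of `Q`, hence alternating in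
characteristic 2, so `A` has even rank and, being nilpotent, a kernel of dimension at least 2.
`Q` is additive on `ker A`, so over an algebraically closed field it vanishes at some
`e₊ ≠ 0` there. Pick `e₋` with `(e₊, e₋) = 1` and let `W = ⟨e₊, e₋⟩^⊥`: the quadratic form
`Q|_W` has the nilpotent associated endomorphism `x ↦ Ax - (Ax, e₋) e₊`, and a good basis of `W`
for it, completed by `e_{2r+1} = e₊` and `e_{-2r-1} = e₋`, is the required basis.
-/

/-- The index set `H_r` of odd integers `i` with `-2r+1 ≤ i ≤ 2r-1`. -/
def Hr (r : ℕ) : Type := {i : ℤ // Odd i ∧ -(2 * (r : ℤ)) + 1 ≤ i ∧ i ≤ 2 * (r : ℤ) - 1}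

open Module LinearMap Submodule QuadraticMap

/-- `Hr r` is, by definition, the subtype of `oddRange r`. -/
def oddRange (r : ℕ) : Set ℤ := {i | Odd i ∧ -(2 * (r : ℤ)) + 1 ≤ i ∧ i ≤ 2 * (r : ℤ) - 1}

lemma oddRange_zero : oddRange 0 = ∅ :=
  Set.eq_empty_of_forall_notMem fun i ⟨_, h₁, h₂⟩ => by omega

lemma neg_mem_oddRange {r : ℕ} {i : ℤ} (hi : i ∈ oddRange r) : -i ∈ oddRange r :=
  ⟨hi.1.neg, by linarith [hi.2.2], by linarith [hi.2.1]⟩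

lemma mem_oddRange_succ {r : ℕ} {i : ℤ} :
    i ∈ oddRange (r + 1) ↔ i = 2 * r + 1 ∨ i = -(2 * r + 1) ∨ i ∈ oddRange r := by
  simp only [oddRange, Set.mem_ofPred_eq, Int.odd_iff]
  push_cast
  omega

namespace LinearMap.BilinForm

variable {K V : Type*} [Field K] [AddCommGroup V] [Module K V] {B : LinearMap.BilinForm K V}

lemma IsAlt.isSymm_of_charTwo [CharP K 2] (hB : B.IsAlt) : B.IsSymm :=
  ⟨fun x y => by rw [← hB.neg_eq, CharTwo.neg_eq]⟩

lemma Nondegenerate.exists_apply_eq_one (hB : B.Nondegenerate) {u : V} (hu : u ≠ 0) :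
    ∃ w, B u w = 1 := by
  obtain ⟨w, hw⟩ : ∃ w, B u w ≠ 0 := by
    by_contra! h
    exact hu (hB.1 u h)
  exact ⟨(B u w)⁻¹ • w, by rw [map_smul, smul_eq_mul, inv_mul_cancel₀ hw]⟩

lemma IsAlt.coeffs_eq_zero_of_apply_eq_zero (hB : B.IsAlt) {u w : V} (huw : B u w = 1)
    {a b : K} (hu : B u (a • u + b • w) = 0) (hw : B w (a • u + b • w) = 0) : a = 0 ∧ b = 0 := by
  have hwu : B w u = -1 := by rw [← hB.neg_eq, huw]
  simp only [map_add, map_smul, smul_eq_mul, hB.self_eq_zero, huw, hwu] at hu hw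
  exact ⟨by simpa using hw, by simpa using hu⟩

lemma IsAlt.linearIndependent_pair (hB : B.IsAlt) {u w : V} (huw : B u w = 1) :
    LinearIndependent K ![u, w] :=
  LinearIndependent.pair_iff.2 fun _ _ h =>
    hB.coeffs_eq_zero_of_apply_eq_zero huw (by simp [h]) (by simp [h])

lemma IsAlt.finrank_span_pair (hB : B.IsAlt) {u w : V} (huw : B u w = 1) :
    finrank K (span K {u, w}) = 2 := by
  rw [← Matrix.range_cons_cons_empty u w ![], finrank_span_eq_card (hB.linearIndependent_pair huw),
    Fintype.card_fin]

lemma IsAlt.disjoint_span_pair_orthogonal (hB : B.IsAlt) {u w : V} (huw : B u w = 1) :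
    Disjoint (span K {u, w}) (B.orthogonal (span K {u, w})) := by
  rw [disjoint_iff_inf_le]
  rintro x ⟨hx, hx'⟩
  obtain ⟨a, b, rfl⟩ := mem_span_pair.1 hx
  obtain ⟨rfl, rfl⟩ := hB.coeffs_eq_zero_of_apply_eq_zero huw
    (hx' u (subset_span (by simp))) (hx' w (subset_span (by simp)))
  simp

variable [FiniteDimensional K V]

lemma IsAlt.isCompl_span_pair_orthogonal (hB : B.IsAlt) {u w : V} (huw : B u w = 1) :
    IsCompl (span K {u, w}) (B.orthogonal (span K {u, w})) :=
  (isCompl_orthogonal_iff_disjoint hB.isRefl).2 (hB.disjoint_span_pair_orthogonal huw)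

lemma IsAlt.nondegenerate_restrict_orthogonal_span_pair (hB : B.IsAlt) (hnd : B.Nondegenerate)
    {u w : V} (huw : B u w = 1) :
    (B.restrict (B.orthogonal (span K {u, w}))).Nondegenerate := by
  rw [restrict_nondegenerate_iff_isCompl_orthogonal hB.isRefl, orthogonal_orthogonal hnd hB.isRefl]
  exact (hB.isCompl_span_pair_orthogonal huw).symm

lemma IsAlt.finrank_orthogonal_span_pair (hB : B.IsAlt) (hnd : B.Nondegenerate) {u w : V}
    (huw : B u w = 1) : finrank K (B.orthogonal (span K {u, w})) = finrank K V - 2 := by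
  rw [finrank_orthogonal hnd, hB.finrank_span_pair huw]

theorem IsAlt.even_finrank (hB : B.IsAlt) (hnd : B.Nondegenerate) : Even (finrank K V) := by
  induction hn : finrank K V using Nat.strong_induction_on generalizing V with
  | _ n ih =>
  rcases eq_or_ne n 0 with rfl | hn0
  · exact Even.zero
  have : Nontrivial V := finrank_pos_iff (R := K).1 (by omega)
  obtain ⟨u, hu⟩ := exists_ne (0 : V)
  obtain ⟨w, huw⟩ := hnd.exists_apply_eq_one hu
  have h2 : 2 ≤ n := hn ▸ hB.finrank_span_pair huw ▸ Submodule.finrank_le _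
  obtain ⟨m, hm⟩ := ih (n - 2) (by omega) (B := B.restrict _) (fun x => hB x)
    (hB.nondegenerate_restrict_orthogonal_span_pair hnd huw)
    (by rw [hB.finrank_orthogonal_span_pair hnd huw, hn])
  exact ⟨m + 1, by omega⟩

theorem IsAlt.even_finrank_range (hB : B.IsAlt) : Even (finrank K (LinearMap.range B)) := by
  obtain ⟨W, hW⟩ := (LinearMap.ker B).exists_isCompl
  have hker : LinearMap.ker (B.restrict W) = ⊥ := by
    rw [ker_restrict_eq_of_codisjoint hW.symm.codisjoint, ← disjoint_iff_comap_eq_bot]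
    · exact hW.symm.disjoint
    · intro x _ y hy
      exact hB.isRefl y x (by rw [mem_ker.1 hy]; rfl)
  have hW_even := IsAlt.even_finrank (B := B.restrict W) (fun x => hB x)
    (nondegenerate_iff_ker_eq_bot.2 hker)
  have := finrank_add_eq_of_isCompl hW
  have := finrank_range_add_finrank_ker B
  rwa [show finrank K (LinearMap.range B) = finrank K W by omega]

end LinearMap.BilinForm

theorem Module.End.isNilpotent_of_sub_mem {R M : Type*} [Ring R] [AddCommGroup M] [Module R M]
    {A : End R M} (hA : IsNilpotent A) {W N : Submodule R M} (hWN : Disjoint W N)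
    (hN : N ≤ LinearMap.ker A) {f : End R W} (hf : ∀ w : W, (f w : M) - A w ∈ N) :
    IsNilpotent f := by
  obtain ⟨n, hn⟩ := hA
  have hpow : ∀ m (w : W), ((f ^ m) w : M) - (A ^ m) w ∈ N := by
    intro m
    induction m with
    | zero => simp
    | succ m ih =>
      intro w
      have hA_eq : A ((f ^ m) w) = A ((A ^ m) w) := sub_eq_zero.1 (by simpa using hN (ih w))
      rw [pow_succ', pow_succ', Module.End.mul_apply, Module.End.mul_apply, ← hA_eq]
      exact hf _
  refine ⟨n, LinearMap.ext fun w => Subtype.ext ?_⟩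
  have := hpow n w
  rw [hn, LinearMap.zero_apply, sub_zero] at this
  exact disjoint_def.1 hWN _ ((f ^ n) w).2 this

namespace QuadraticMap

variable {K V : Type*} [Field K] [AddCommGroup V] [Module K V] {Q : QuadraticForm K V}

theorem exists_ne_zero_eq_zero_of_polar_eq_zero [IsAlgClosed K] {U : Submodule K V}
    (hU : 2 ≤ finrank K U) (hpolar : ∀ x ∈ U, ∀ y ∈ U, polar Q x y = 0) :
    ∃ x ∈ U, x ≠ 0 ∧ Q x = 0 := by
  obtain ⟨x, hxU, hx0⟩ := U.exists_mem_ne_zero_of_ne_bot (by rintro rfl; simp at hU)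
  by_cases hQx : Q x = 0
  · exact ⟨x, hxU, hx0, hQx⟩
  obtain ⟨y, hyU, hyx⟩ : ∃ y ∈ U, y ∉ K ∙ x := by
    by_contra! h
    have := Submodule.finrank_mono (show U ≤ K ∙ x from h)
    rw [finrank_span_singleton hx0] at this
    omega
  obtain ⟨c, hc⟩ := IsAlgClosed.exists_pow_nat_eq (-Q y / Q x) two_pos
  refine ⟨y + c • x, U.add_mem hyU (U.smul_mem c hxU), fun h => hyx ?_, ?_⟩
  · rw [add_eq_zero_iff_eq_neg.1 h]
    exact neg_mem (smul_mem _ _ (mem_span_singleton_self x))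
  · rw [QuadraticMap.map_add Q, hpolar y hyU _ (U.smul_mem c hxU), QuadraticMap.map_smul,
      smul_eq_mul, ← pow_two, hc, div_mul_cancel₀ _ hQx]
    ring

variable [CharP K 2] {B : LinearMap.BilinForm K V} {A : End K V}

lemma isAlt_comp_of_polar_eq (hQA : ∀ x y, polar Q x y = B (A x) y) :
    LinearMap.BilinForm.IsAlt (B ∘ₗ A) := fun x => by
  rw [LinearMap.comp_apply, ← hQA, polar_self, two_smul, CharTwo.add_self_eq_zero]

variable [FiniteDimensional K V]

lemma two_le_finrank_ker_of_polar_eq [Nontrivial V] (hB : B.IsAlt) (hnd : B.Nondegenerate)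
    (hQA : ∀ x y, polar Q x y = B (A x) y) (hA : IsNilpotent A) :
    2 ≤ finrank K (LinearMap.ker A) := by
  have hker_ne : LinearMap.ker A ≠ ⊥ := fun h => hA.not_isUnit ((isUnit_iff_ker_eq_bot A).2 h)
  have hker_pos : finrank K (LinearMap.ker A) ≠ 0 := fun h => hker_ne (finrank_eq_zero.1 h)
  obtain ⟨m, hm⟩ := hB.even_finrank hnd
  obtain ⟨m', hm'⟩ := (isAlt_comp_of_polar_eq hQA).even_finrank_range
  have := finrank_range_add_finrank_ker (B ∘ₗ A)
  rw [ker_comp_of_ker_eq_bot A hnd.ker_eq_bot] at this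
  omega

theorem exists_ne_zero_apply_eq_zero_eq_zero [IsAlgClosed K] [Nontrivial V] (hB : B.IsAlt)
    (hnd : B.Nondegenerate) (hQA : ∀ x y, polar Q x y = B (A x) y) (hA : IsNilpotent A) :
    ∃ x, A x = 0 ∧ x ≠ 0 ∧ Q x = 0 := by
  obtain ⟨x, hx, hx0, hQx⟩ := exists_ne_zero_eq_zero_of_polar_eq_zero
    (two_le_finrank_ker_of_polar_eq hB hnd hQA hA) fun x hx y _ => by
      rw [hQA, mem_ker.1 hx, map_zero, LinearMap.zero_apply]
  exact ⟨x, hx, hx0, hQx⟩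

end QuadraticMap

section ExtendFamily

variable {V : Type*} {r : ℕ} {ep em : V} {e : ℤ → V}

def extendFamily (r : ℕ) (ep em : V) (e : ℤ → V) : ℤ → V :=
  Function.update (Function.update e (2 * r + 1) ep) (-(2 * r + 1)) em

@[simp] lemma extendFamily_apply_pos : extendFamily r ep em e (2 * r + 1) = ep := by
  rw [extendFamily, Function.update_of_ne (by omega), Function.update_self]

@[simp] lemma extendFamily_apply_neg : extendFamily r ep em e (-(2 * r + 1)) = em :=
  Function.update_self ..

lemma extendFamily_apply_of_mem {i : ℤ} (hi : i ∈ oddRange r) : extendFamily r ep em e i = e i := by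
  rw [extendFamily, Function.update_of_ne (by linarith [hi.2.1]),
    Function.update_of_ne (by linarith [hi.2.2])]

lemma extendFamily_image {T : Set ℤ} (hT : T ⊆ oddRange r) :
    extendFamily r ep em e '' T = e '' T :=
  Set.image_congr fun _ hi => extendFamily_apply_of_mem (hT hi)

end ExtendFamily

section GoodFamily

variable {K V : Type*} [Field K] [AddCommGroup V] [Module K V]

/-- A good basis adapted to `(Q, A)`, as a family on `ℤ` of which only the values on
`oddRange r` matter. -/
structure IsGoodFamily (B : LinearMap.BilinForm K V) (Q : QuadraticForm K V) (A : End K V) (r : ℕ)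
    (e : ℤ → V) : Prop where
  apply_apply : ∀ i ∈ oddRange r, ∀ j ∈ oddRange r, B (e i) (e j) = if i + j = 0 then 1 else 0
  span_eq_top : span K (e '' oddRange r) = ⊤
  apply_mem_span : ∀ i ∈ oddRange r, A (e i) ∈ span K (e '' {j ∈ oddRange r | i < j})
  eq_zero : ∀ i ∈ oddRange r, 0 ≤ i → Q (e i) = 0

variable {B : LinearMap.BilinForm K V} {Q : QuadraticForm K V} {A : End K V} {r : ℕ} {e : ℤ → V}

lemma IsGoodFamily.linearIndependent (he : IsGoodFamily B Q A r e) :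
    LinearIndependent K fun i : Hr r => e i.1 := by
  refine .of_pairwise_dual_eq_zero_one _ (fun i => B.flip (e (-i.1))) (fun i j hij => ?_)
    fun i => ?_
  · exact (he.apply_apply _ j.2 _ (neg_mem_oddRange i.2)).trans
      (if_neg fun h => hij (Subtype.ext (by omega)))
  · exact (he.apply_apply _ i.2 _ (neg_mem_oddRange i.2)).trans (if_pos (add_neg_cancel _))

lemma IsGoodFamily.top_le_span_range (he : IsGoodFamily B Q A r e) :
    ⊤ ≤ span K (Set.range fun i : Hr r => e i.1) := by
  rw [← he.span_eq_top]
  refine span_mono ?_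
  rintro _ ⟨i, hi, rfl⟩
  exact ⟨⟨i, hi⟩, rfl⟩

end GoodFamily

section Reduction

variable {K V : Type*} [Field K] [AddCommGroup V] [Module K V]
  {B : LinearMap.BilinForm K V} {Q : QuadraticForm K V} {A : End K V} {ep em : V}

local notation "W" => B.orthogonal (span K (insert ep (singleton em : Set V)))

lemma map_subtype_span_image_extendFamily {U : Submodule K V} {r : ℕ} {eb : ℤ → U} {T : Set ℤ}
    (hT : T ⊆ oddRange r) :
    (span K (eb '' T)).map U.subtype = span K (extendFamily r ep em ((↑) ∘ eb) '' T) := by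
  rw [Submodule.map_span, ← Set.image_comp, extendFamily_image hT]
  rfl

lemma sub_smul_mem_orthogonal_pair [CharP K 2] (hB : B.IsAlt) (h1 : B ep em = 1) {v : V}
    (hv : B ep v = 0) :
    v - B v em • ep ∈ W := by
  have hsymm := hB.isSymm_of_charTwo
  intro n hn
  obtain ⟨a, b, rfl⟩ := mem_span_pair.1 hn
  simp [hv, hB.self_eq_zero, hsymm.eq em v, hsymm.eq em ep, h1]

lemma apply_apply_eq_zero_of_polar_eq [CharP K 2] (hB : B.IsAlt)
    (hQA : ∀ x y, polar Q x y = B (A x) y) (hep : A ep = 0) (v : V) : B ep (A v) = 0 := by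
  rw [hB.isSymm_of_charTwo.eq, ← hQA, polar_comm, hQA, hep, map_zero, LinearMap.zero_apply]

lemma exists_end_orthogonal_pair [CharP K 2] (hB : B.IsAlt) (hQA : ∀ x y, polar Q x y = B (A x) y)
    (hep : A ep = 0) (h1 : B ep em = 1) :
    ∃ A' : End K W, ∀ w : W, (A' w : V) = A w - B (A w) em • ep :=
  ⟨(A - (B.flip em ∘ₗ A).smulRight ep).restrict fun v _ =>
    sub_smul_mem_orthogonal_pair hB h1 (apply_apply_eq_zero_of_polar_eq hB hQA hep v),
    fun _ => rfl⟩

lemma polar_comp_subtype_eq {A' : End K W} (hQA : ∀ x y, polar Q x y = B (A x) y)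
    (hA' : ∀ w : W, (A' w : V) = A w - B (A w) em • ep) (x y : W) :
    polar (Q.comp (W).subtype) x y = B.restrict W (A' x) y := by
  have hy : B ep y = 0 := y.2 ep (subset_span (by simp))
  change polar Q x y = B (A' x) y
  rw [hA', hQA, map_sub, map_smul, LinearMap.sub_apply, LinearMap.smul_apply, hy, smul_zero,
    sub_zero]

lemma isNilpotent_end_orthogonal_pair {A' : End K W} (hB : B.IsAlt) (hep : A ep = 0)
    (h1 : B ep em = 1) (hA : IsNilpotent A) (hA' : ∀ w : W, (A' w : V) = A w - B (A w) em • ep) :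
    IsNilpotent A' := by
  refine Module.End.isNilpotent_of_sub_mem hA ?_ ((span_singleton_le_iff_mem _ _).2 hep)
    fun w => ?_
  · exact (hB.disjoint_span_pair_orthogonal h1).symm.mono_right
      (span_mono (Set.singleton_subset_iff.2 (Set.mem_insert _ _)))
  · rw [hA', sub_sub_cancel_left]
    exact neg_mem (smul_mem _ _ (mem_span_singleton_self ep))

lemma apply_apply_extendFamily [CharP K 2] (hB : B.IsAlt) (h1 : B ep em = 1) {r : ℕ} {eb : ℤ → W}
    (heb : ∀ i ∈ oddRange r, ∀ j ∈ oddRange r, B (eb i) (eb j) = if i + j = 0 then 1 else 0)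
    {i j : ℤ} (hi : i ∈ oddRange (r + 1)) (hj : j ∈ oddRange (r + 1)) :
    B (extendFamily r ep em ((↑) ∘ eb) i) (extendFamily r ep em ((↑) ∘ eb) j) =
      if i + j = 0 then 1 else 0 := by
  have hsymm := hB.isSymm_of_charTwo
  have hep (w : W) : B ep w = 0 := w.2 ep (subset_span (by simp))
  have hem (w : W) : B em w = 0 := w.2 em (subset_span (by simp))
  rcases mem_oddRange_succ.1 hi with rfl | rfl | hi <;>
    rcases mem_oddRange_succ.1 hj with rfl | rfl | hj <;>
    simp only [extendFamily_apply_pos, extendFamily_apply_neg, extendFamily_apply_of_mem, hi, hj,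
      Function.comp_apply, hB.self_eq_zero, h1, hsymm.eq em ep, hep, hem, hsymm.eq _ ep,
      hsymm.eq _ em, heb]
  all_goals have := hi.2; have := hj.2; split_ifs <;> first | rfl | omega

lemma span_extendFamily_eq_top [FiniteDimensional K V] (hB : B.IsAlt) (h1 : B ep em = 1) {r : ℕ}
    {eb : ℤ → W} (heb : span K (eb '' oddRange r) = ⊤) :
    span K (extendFamily r ep em ((↑) ∘ eb) '' oddRange (r + 1)) = ⊤ := by
  refine eq_top_iff.2 ((hB.isCompl_span_pair_orthogonal h1).sup_eq_top.ge.trans (sup_le ?_ ?_))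
  · rw [span_le]
    rintro _ (rfl | rfl)
    · exact subset_span ⟨_, mem_oddRange_succ.2 (Or.inl rfl), extendFamily_apply_pos⟩
    · exact subset_span ⟨_, mem_oddRange_succ.2 (Or.inr (Or.inl rfl)), extendFamily_apply_neg⟩
  · calc W = (span K (eb '' oddRange r)).map (W).subtype := by rw [heb, map_subtype_top]
      _ = span K (extendFamily r ep em ((↑) ∘ eb) '' oddRange r) :=
        map_subtype_span_image_extendFamily subset_rfl
      _ ≤ _ := span_mono (Set.image_mono fun _ hi => mem_oddRange_succ.2 (Or.inr (Or.inr hi)))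

lemma apply_mem_span_extendFamily [CharP K 2] (hB : B.IsAlt)
    (hQA : ∀ x y, polar Q x y = B (A x) y) (hep : A ep = 0) (h1 : B ep em = 1) {A' : End K W}
    (hA' : ∀ w : W, (A' w : V) = A w - B (A w) em • ep) {r : ℕ} {eb : ℤ → W}
    (heb_span : span K (eb '' oddRange r) = ⊤)
    (heb : ∀ i ∈ oddRange r, A' (eb i) ∈ span K (eb '' {j ∈ oddRange r | i < j}))
    {i : ℤ} (hi : i ∈ oddRange (r + 1)) :
    A (extendFamily r ep em ((↑) ∘ eb) i) ∈
      span K (extendFamily r ep em ((↑) ∘ eb) '' {j ∈ oddRange (r + 1) | i < j}) := by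
  have mem_span_of_sub_smul_mem : ∀ T ⊆ {j ∈ oddRange r | i < j}, i < 2 * r + 1 → ∀ v : V,
      v - B v em • ep ∈ (span K (eb '' T)).map (W).subtype →
      v ∈ span K (extendFamily r ep em ((↑) ∘ eb) '' {j ∈ oddRange (r + 1) | i < j}) := by
    intro T hT hir v hv
    rw [map_subtype_span_image_extendFamily (hT.trans (Set.sep_subset _ _))] at hv
    rw [← sub_add_cancel v (B v em • ep)]
    refine add_mem (span_mono (Set.image_mono fun j hj => ?_) hv) (smul_mem _ _ (subset_span
      ⟨_, ⟨mem_oddRange_succ.2 (Or.inl rfl), hir⟩, extendFamily_apply_pos⟩))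
    exact ⟨mem_oddRange_succ.2 (Or.inr (Or.inr (hT hj).1)), (hT hj).2⟩
  rcases mem_oddRange_succ.1 hi with rfl | rfl | hi
  · rw [extendFamily_apply_pos, hep]
    exact zero_mem _
  · rw [extendFamily_apply_neg]
    refine mem_span_of_sub_smul_mem (oddRange r) (fun j hj => ⟨hj, by linarith [hj.2.1]⟩)
      (by omega) _ ?_
    rw [heb_span, map_subtype_top]
    exact sub_smul_mem_orthogonal_pair hB h1 (apply_apply_eq_zero_of_polar_eq hB hQA hep em)
  · rw [extendFamily_apply_of_mem hi]
    refine mem_span_of_sub_smul_mem _ subset_rfl (by linarith [hi.2.2]) _ ?_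
    rw [Function.comp_apply, ← hA']
    exact ⟨_, heb i hi, rfl⟩

lemma eq_zero_extendFamily (hQep : Q ep = 0) {r : ℕ} {eb : ℤ → W}
    (heb : ∀ i ∈ oddRange r, 0 ≤ i → Q (eb i) = 0) {i : ℤ} (hi : i ∈ oddRange (r + 1))
    (h0 : 0 ≤ i) : Q (extendFamily r ep em ((↑) ∘ eb) i) = 0 := by
  rcases mem_oddRange_succ.1 hi with rfl | rfl | hi
  · rwa [extendFamily_apply_pos]
  · omega
  · rw [extendFamily_apply_of_mem hi]
    exact heb i hi h0

theorem IsGoodFamily.extendFamily_succ [CharP K 2] [FiniteDimensional K V] (hB : B.IsAlt)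
    (hQA : ∀ x y, polar Q x y = B (A x) y) (hep : A ep = 0) (hQep : Q ep = 0) (h1 : B ep em = 1)
    {A' : End K W} (hA' : ∀ w : W, (A' w : V) = A w - B (A w) em • ep) {r : ℕ} {eb : ℤ → W}
    (heb : IsGoodFamily (B.restrict W) (Q.comp (W).subtype) A' r eb) :
    IsGoodFamily B Q A (r + 1) (extendFamily r ep em ((↑) ∘ eb)) where
  apply_apply _ hi _ hj := apply_apply_extendFamily hB h1 heb.apply_apply hi hj
  span_eq_top := span_extendFamily_eq_top hB h1 heb.span_eq_top
  apply_mem_span _ hi :=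
    apply_mem_span_extendFamily hB hQA hep h1 hA' heb.span_eq_top heb.apply_mem_span hi
  eq_zero _ hi := eq_zero_extendFamily hQep heb.eq_zero hi

end Reduction

theorem exists_isGoodFamily {K V : Type*} [Field K] [IsAlgClosed K] [CharP K 2] [AddCommGroup V]
    [Module K V] [FiniteDimensional K V] {B : LinearMap.BilinForm K V} {Q : QuadraticForm K V}
    {A : End K V} {r : ℕ} (hdim : finrank K V = 2 * r) (hB : B.IsAlt) (hnd : B.Nondegenerate)
    (hQA : ∀ x y, polar Q x y = B (A x) y) (hA : IsNilpotent A) : ∃ e, IsGoodFamily B Q A r e := by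
  induction r generalizing V with
  | zero =>
    have hV : span K (∅ : Set V) = ⊤ := eq_top_of_finrank_eq (by simp [hdim])
    exact ⟨0, by constructor <;> simp [oddRange_zero, hV]⟩
  | succ r ih =>
    have : Nontrivial V := finrank_pos_iff (R := K).1 (by omega)
    obtain ⟨ep, hep, hep0, hQep⟩ := exists_ne_zero_apply_eq_zero_eq_zero hB hnd hQA hA
    obtain ⟨em, h1⟩ := hnd.exists_apply_eq_one hep0
    obtain ⟨A', hA'⟩ := exists_end_orthogonal_pair hB hQA hep h1
    obtain ⟨eb, heb⟩ := ih (B := B.restrict _) (A := A')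
      (by rw [hB.finrank_orthogonal_span_pair hnd h1, hdim]; omega) (fun x => hB x)
      (hB.nondegenerate_restrict_orthogonal_span_pair hnd h1)
      (polar_comp_subtype_eq hQA hA') (isNilpotent_end_orthogonal_pair hB hep h1 hA hA')
    exact ⟨_, heb.extendFamily_succ hB hQA hep hQep h1 hA'⟩

/-- char 2, `V` a `2r`-dimensional symplectic space, `Q` a quadratic
form whose associated endomorphism `A` (with `Q(x+y) - Qx - Qy = B(Ax, y)`) is
nilpotent.  Then there is a good basis `(e_i)_{i ∈ H_r}` (i.e. `(e_i,e_j) = δ_{i+j,0}`)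
such that `A e_i ∈ span{e_j : j > i}` for all `i`, and `Q e_i = 0` for `i ≥ 0`. -/
theorem exists_good_basis_nilpotent
    (k V : Type*) [Field k] [IsAlgClosed k] [CharP k 2] [AddCommGroup V] [Module k V]
    [FiniteDimensional k V] (r : ℕ) (hdim : Module.finrank k V = 2 * r)
    (B : LinearMap.BilinForm k V) (halt : B.IsAlt) (hnd : B.Nondegenerate)
    (Q : QuadraticForm k V) (A : Module.End k V)
    (hA : ∀ x y : V, Q (x + y) - Q x - Q y = B (A x) y)
    (hnil : IsNilpotent A) :
    ∃ e : Module.Basis (Hr r) k V,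
      (∀ i j : Hr r, B (e i) (e j) = if i.1 + j.1 = 0 then 1 else 0) ∧
      (∀ i : Hr r, A (e i) ∈ Submodule.span k {v : V | ∃ j : Hr r, i.1 < j.1 ∧ e j = v}) ∧
      (∀ i : Hr r, 0 ≤ i.1 → Q (e i) = 0) := by
  obtain ⟨e, he⟩ := exists_isGoodFamily hdim halt hnd hA hnil
  refine ⟨.mk he.linearIndependent he.top_le_span_range, fun i j => ?_, fun i => ?_, fun i hi => ?_⟩
  all_goals simp only [Basis.coe_mk]
  · exact he.apply_apply _ i.2 _ j.2
  · refine span_mono ?_ (he.apply_mem_span _ i.2)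
    rintro _ ⟨j, ⟨hj, hij⟩, rfl⟩
    exact ⟨⟨j, hj⟩, hij, rfl⟩
  · exact he.eq_zero _ i.2 hi
end

section
/- Let V be a symplectic vector space with an s-good grading over a field of characteristic 2, B ∈ Sp(V) a symplectic automorphism, and Q ∈ Q(V)_2^0 such that Q(Bx) = Q(x) for all x ∈ V. Then B preserves the filtration: B(V_{≥i}) = V_{≥i} for all i. -/
/-- An `s`-good grading of a symplectic vector space `(V, B)`. -/
def SGood (k V : Type*) [Field k] [AddCommGroup V] [Module k V]
    (B : LinearMap.BilinForm k V) (Vg : ℤ → Submodule k V) : Prop :=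
  DirectSum.IsInternal Vg ∧
  (∀ i : ℤ, 0 ≤ i →
    Module.finrank k (Vg (-i)) = Module.finrank k (Vg i) ∧
    Module.finrank k (Vg (-i - 2)) ≤ Module.finrank k (Vg (-i))) ∧
  (∀ i : ℤ, Even i → Even (Module.finrank k (Vg i))) ∧
  (∀ i j : ℤ, i + j ≠ 0 → ∀ x ∈ Vg i, ∀ y ∈ Vg j, B x y = 0)

/-- `Q ∈ Q(V)₂⁰`: `A = A_Q` shifts the grading by `2`, `Q` vanishes on `V_i` for
`i ≠ -1`, `A^n : V_{-n} → V_n` is bijective for even `n ≥ 0`, and for odd `n ≥ 1`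
the map `A^{(n-1)/2} : V_{-n} → V_{-1}` is injective with `Q` nondegenerate on its
image (no nonzero vector of the image lies in the radical of the polar form of
`Q|_image` and has `Q`-value `0`). -/
def QV20 (k V : Type*) [Field k] [AddCommGroup V] [Module k V]
    (Vg : ℤ → Submodule k V) (Q : QuadraticForm k V) (A : Module.End k V) : Prop :=
  (∀ i : ℤ, ∀ x ∈ Vg i, A x ∈ Vg (i + 2)) ∧
  (∀ i : ℤ, i ≠ -1 → ∀ x ∈ Vg i, Q x = 0) ∧
  (∀ n : ℕ, Even n →
    (∀ x ∈ Vg (-(n : ℤ)), (A ^ n) x = 0 → x = 0) ∧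
    (∀ y ∈ Vg (n : ℤ), ∃ x ∈ Vg (-(n : ℤ)), (A ^ n) x = y)) ∧
  (∀ n : ℕ, Odd n →
    (∀ x ∈ Vg (-(n : ℤ)), (A ^ ((n - 1) / 2)) x = 0 → x = 0) ∧
    (∀ w ∈ ⇑(A ^ ((n - 1) / 2)) '' (Vg (-(n : ℤ)) : Set V),
      (∀ w' ∈ ⇑(A ^ ((n - 1) / 2)) '' (Vg (-(n : ℤ)) : Set V),
        QuadraticMap.polar Q w w' = 0) → Q w = 0 → w = 0))

/-!
Since `g` preserves `B` and `Q`, it commutes with `A`, which is skew-adjoint for `B` because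
`B (A x) y` is the polar form of `Q`. Pairing `V_i` with `V_{-i}` makes `V_{≥ a}` the
`B`-orthogonal of `V_{≥ 1 - a}`, so it suffices to treat `i ≤ 0`, by induction upwards from an
index below the grading where `V_{≥ i} = V`. The inductive step rests on
`V_{≥ -n} = {x ∈ V_{≥ -n-1} | A^{n+1} x ∈ V_{≥ n+2} and, for even n, Q (A^{n/2} x) = 0}`,
whose conditions `g` preserves once it preserves `V_{≥ -n-1}` and hence its orthogonal
`V_{≥ n+2}`. For this equality, the component `v ∈ V_{-n-1}` of such an `x` satisfies
`A^{n+1} v = 0`; if `n + 1` is even, `v = 0` by injectivity of `A^{n+1}` on `V_{-n-1}`, and if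
`n + 1 = 2c + 1`, then `A^c v ∈ V_{-1}` is `Q`-isotropic and, by skew-adjointness, polar-orthogonal
to `A^c V_{-n-1}`, so it vanishes by the nondegeneracy in `Q(V)₂⁰`.
-/

theorem LinearMap.IsAdjointPair.pow {R M N : Type*} [CommSemiring R] [AddCommMonoid M]
    [Module R M] [AddCommMonoid N] [Module R N] {I : R →+* R} {B : M →ₗ[R] M →ₛₗ[I] N}
    {f g : Module.End R M} (h : IsAdjointPair B B f g) (n : ℕ) :
    IsAdjointPair B B ⇑(f ^ n) ⇑(g ^ n) := by
  induction n with
  | zero => exact isAdjointPair_one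
  | succ n ih => rw [pow_succ', pow_succ]; exact h.mul ih

section General

variable {R M : Type*} [CommRing R] [AddCommGroup M] [Module R M]
  {B : LinearMap.BilinForm R M} {Q : QuadraticForm R M} {A : Module.End R M}

theorem isAdjointPair_neg_of_polar_eq (halt : B.IsAlt)
    (hA : ∀ x y : M, Q (x + y) - Q x - Q y = B (A x) y) :
    LinearMap.IsAdjointPair B B ⇑(-A) ⇑A := by
  intro x y
  have hsymm : B (A x) y = B (A y) x := by rw [← hA, ← hA, add_comm x y]; ring
  rw [LinearMap.neg_apply, map_neg, LinearMap.neg_apply, hsymm, halt.neg_eq]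

theorem commute_of_isometry_of_polar_eq (hsep : B.SeparatingLeft)
    (hA : ∀ x y : M, Q (x + y) - Q x - Q y = B (A x) y) {g : M ≃ₗ[R] M}
    (hB : ∀ x y, B (g x) (g y) = B x y) (hQ : ∀ x, Q (g x) = Q x) :
    Commute A (g : Module.End R M) := by
  refine LinearMap.ext fun x => sub_eq_zero.mp (hsep _ fun y => ?_)
  obtain ⟨y, rfl⟩ := g.surjective y
  rw [map_sub, LinearMap.sub_apply, sub_eq_zero, Module.End.mul_apply, Module.End.mul_apply,
    LinearEquiv.coe_coe, hB, ← hA, ← hA, ← map_add, hQ, hQ, hQ]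

end General

section FiniteDimensional

variable {k V : Type*} [Field k] [AddCommGroup V] [Module k V] [FiniteDimensional k V]
  {B : LinearMap.BilinForm k V}

theorem LinearEquiv.map_eq_of_map_le {g : V ≃ₗ[k] V} {U : Submodule k V}
    (h : U.map g.toLinearMap ≤ U) : U.map g.toLinearMap = U :=
  Submodule.eq_of_le_of_finrank_eq h (LinearEquiv.finrank_map_eq g U)

theorem LinearMap.BilinForm.map_orthogonal_eq_of_isometry {g : V ≃ₗ[k] V}
    (hB : ∀ x y, B (g x) (g y) = B x y) {U : Submodule k V} (hU : U.map g.toLinearMap = U) :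
    (B.orthogonal U).map g.toLinearMap = B.orthogonal U := by
  refine g.map_eq_of_map_le ?_
  rintro _ ⟨x, hx, rfl⟩ _ hn
  rw [← hU] at hn
  obtain ⟨u, hu, rfl⟩ := hn
  exact (hB u x).trans (hx u hu)

end FiniteDimensional

namespace IntGrading

section Filtration

variable {R M : Type*} [Semiring R] [AddCommMonoid M] [Module R M] {Vg : ℤ → Submodule R M}

def filtration (Vg : ℤ → Submodule R M) (i : ℤ) : Submodule R M := ⨆ j ≥ i, Vg j

theorem le_filtration {i j : ℤ} (h : i ≤ j) : Vg j ≤ filtration Vg i :=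
  le_iSup₂ (f := fun j (_ : j ≥ i) => Vg j) j h

theorem filtration_antitone : Antitone (filtration Vg) :=
  fun _ _ h => iSup₂_le fun _ hj => le_filtration (h.trans hj)

theorem filtration_eq_sup_succ (i : ℤ) : filtration Vg i = Vg i ⊔ filtration Vg (i + 1) := by
  refine le_antisymm (iSup₂_le fun j hj => ?_) (sup_le (le_filtration le_rfl)
    (filtration_antitone (by omega)))
  rcases hj.eq_or_lt with rfl | hj
  · exact le_sup_left
  · exact (le_filtration (by omega)).trans le_sup_right

theorem exists_eq_add_of_mem_filtration {i : ℤ} {x : M} (hx : x ∈ filtration Vg i) :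
    ∃ v ∈ Vg i, ∃ y ∈ filtration Vg (i + 1), v + y = x := by
  rw [filtration_eq_sup_succ] at hx
  exact Submodule.mem_sup.mp hx

theorem filtration_induction {i : ℤ} {p : M → Prop} (mem : ∀ j, i ≤ j → ∀ x ∈ Vg j, p x)
    (zero : p 0)
    (add : ∀ x y, x ∈ filtration Vg i → y ∈ filtration Vg i → p x → p y → p (x + y))
    {x : M} (hx : x ∈ filtration Vg i) : p x := by
  suffices x ∈ filtration Vg i ∧ p x from this.2
  refine Submodule.iSup_induction _ (motive := fun x => x ∈ filtration Vg i ∧ p x) hx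
    (fun j x hx => ?_) ⟨zero_mem _, zero⟩
    fun x y hx hy => ⟨add_mem hx.1 hy.1, add x y hx.1 hy.1 hx.2 hy.2⟩
  by_cases hj : i ≤ j
  · rw [iSup_pos hj] at hx
    exact ⟨le_filtration hj hx, mem j hj x hx⟩
  · rw [iSup_neg hj, Submodule.mem_bot] at hx
    exact hx ▸ ⟨zero_mem _, zero⟩

theorem exists_filtration_eq_top [IsNoetherian R M] (hind : iSupIndep Vg)
    (hspan : iSup Vg = ⊤) :
    ∃ m : ℤ, ∀ i ≤ m, filtration Vg i = ⊤ := by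
  obtain ⟨m, hm⟩ := (Submodule.finite_ne_bot_of_iSupIndep hind).bddBelow
  refine ⟨m, fun i hi => eq_top_iff.mpr (hspan ▸ iSup_le fun j => ?_)⟩
  by_cases hj : Vg j = ⊥
  · exact hj ▸ bot_le
  · exact le_filtration (hi.trans (hm hj))

theorem pow_apply_mem {A : Module.End R M} {d : ℤ} (hA : ∀ i, ∀ x ∈ Vg i, A x ∈ Vg (i + d))
    (n : ℕ) {i : ℤ} {x : M} (hx : x ∈ Vg i) : (A ^ n) x ∈ Vg (i + n * d) := by
  induction n generalizing i x with
  | zero => simpa using hx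
  | succ n ih =>
    rw [pow_succ, Module.End.mul_apply]
    convert ih (hA i x hx) using 2
    push_cast; ring

theorem pow_apply_mem_filtration {A : Module.End R M} {d : ℤ}
    (hA : ∀ i, ∀ x ∈ Vg i, A x ∈ Vg (i + d)) (n : ℕ) {i : ℤ} {x : M}
    (hx : x ∈ filtration Vg i) : (A ^ n) x ∈ filtration Vg (i + n * d) := by
  suffices h : filtration Vg i ≤ (filtration Vg (i + n * d)).comap (A ^ n) from h hx
  exact iSup₂_le fun j hj y hy => le_filtration (by omega) (pow_apply_mem hA n hy)

end Filtration

section Bilinear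

variable {R M : Type*} [CommRing R] [AddCommGroup M] [Module R M]
  {B : LinearMap.BilinForm R M} {Vg : ℤ → Submodule R M} {Q : QuadraticForm R M}
  {A : Module.End R M}

def IsOrthogonalGrading (B : LinearMap.BilinForm R M) (Vg : ℤ → Submodule R M) : Prop :=
  ∀ i j : ℤ, i + j ≠ 0 → ∀ x ∈ Vg i, ∀ y ∈ Vg j, B x y = 0

theorem IsOrthogonalGrading.apply_eq_zero_of_mem_filtration (horth : IsOrthogonalGrading B Vg)
    {a b : ℤ} (hab : 0 < a + b) {x y : M} (hx : x ∈ filtration Vg a) (hy : y ∈ filtration Vg b) :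
    B x y = 0 := by
  have hVg : ∀ i ≥ a, ∀ x ∈ Vg i, B x y = 0 := fun i hi x hx =>
    (iSup₂_le fun j hj z hz => horth i j (by omega) x hx z hz :
      filtration Vg b ≤ LinearMap.ker (B x)) hy
  exact (iSup₂_le fun i hi z hz => hVg i hi z hz :
    filtration Vg a ≤ LinearMap.ker (B.flip y)) hx

theorem IsOrthogonalGrading.eq_zero_of_forall_apply_eq_zero (horth : IsOrthogonalGrading B Vg)
    (hsep : B.SeparatingRight) (hspan : iSup Vg = ⊤) {p : ℤ} {x : M} (hx : x ∈ Vg p)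
    (h : ∀ z ∈ Vg (-p), B z x = 0) : x = 0 := by
  refine hsep x fun z => (?_ : ⊤ ≤ LinearMap.ker (B.flip x)) Submodule.mem_top
  refine hspan ▸ iSup_le fun j z hz => ?_
  by_cases hj : j = -p
  · exact h z (hj ▸ hz)
  · exact horth j p (by omega) z hz x hx

theorem IsOrthogonalGrading.eq_zero_of_mem_filtration_succ (horth : IsOrthogonalGrading B Vg)
    (hsep : B.SeparatingRight) (hspan : iSup Vg = ⊤) {p : ℤ} {x : M} (hx : x ∈ Vg p)
    (hx' : x ∈ filtration Vg (p + 1)) : x = 0 :=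
  horth.eq_zero_of_forall_apply_eq_zero hsep hspan hx fun _ hz =>
    horth.apply_eq_zero_of_mem_filtration (by omega : 0 < -p + (p + 1))
      (le_filtration le_rfl hz) hx'

theorem IsOrthogonalGrading.filtration_eq_orthogonal [IsNoetherian R M]
    (horth : IsOrthogonalGrading B Vg) (hsep : B.SeparatingRight)
    (hint : DirectSum.IsInternal Vg) {a b : ℤ} (hab : a + b = 1) :
    filtration Vg a = B.orthogonal (filtration Vg b) := by
  refine le_antisymm (fun x hx y hy => horth.apply_eq_zero_of_mem_filtration (by omega) hy hx)
    fun x hx => ?_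
  have hstep : ∀ r < a, x ∈ filtration Vg r → x ∈ filtration Vg (r + 1) := by
    intro r hr hxr
    obtain ⟨v, hv, y, hy, rfl⟩ := exists_eq_add_of_mem_filtration hxr
    suffices v = 0 by rwa [this, zero_add]
    refine horth.eq_zero_of_forall_apply_eq_zero hsep hint.submodule_iSup_eq_top hv
      fun z hz => ?_
    have hzx : B z (v + y) = 0 := hx z (le_filtration (by omega) hz)
    have hzy : B z y = 0 :=
      horth.apply_eq_zero_of_mem_filtration (by omega : 0 < -r + (r + 1))
        (le_filtration le_rfl hz) hy
    rwa [map_add, hzy, add_zero] at hzx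
  obtain ⟨m, hm⟩ := exists_filtration_eq_top hint.submodule_iSupIndep hint.submodule_iSup_eq_top
  refine Int.leInduction (m := min m a) (motive := fun r _ => r ≤ a → x ∈ filtration Vg r)
    (fun _ => hm _ (min_le_left _ _) ▸ Submodule.mem_top)
    (fun r _ ih hr => hstep r (by omega) (ih (by omega))) a (min_le_right _ _) le_rfl

theorem IsOrthogonalGrading.polar_eq_zero (horth : IsOrthogonalGrading B Vg)
    (hA2 : ∀ i, ∀ x ∈ Vg i, A x ∈ Vg (i + 2))
    (hA : ∀ x y : M, Q (x + y) - Q x - Q y = B (A x) y) {u w : M}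
    (hu : u ∈ filtration Vg (-1)) (hw : w ∈ filtration Vg 0) : QuadraticMap.polar Q u w = 0 :=
  (hA u w).trans <| horth.apply_eq_zero_of_mem_filtration (by norm_num : (0 : ℤ) < 1 + 0)
    (by simpa using pow_apply_mem_filtration hA2 1 hu) hw

theorem IsOrthogonalGrading.quadratic_eq_zero_of_mem_filtration_zero
    (horth : IsOrthogonalGrading B Vg)
    (hA2 : ∀ i, ∀ x ∈ Vg i, A x ∈ Vg (i + 2)) (hQ0 : ∀ i, i ≠ -1 → ∀ x ∈ Vg i, Q x = 0)
    (hA : ∀ x y : M, Q (x + y) - Q x - Q y = B (A x) y) {x : M}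
    (hx : x ∈ filtration Vg 0) : Q x = 0 := by
  refine filtration_induction (fun j hj y hy => hQ0 j (by omega) y hy) Q.map_zero
    (fun u w hu hw hQu hQw => ?_) hx
  have := horth.polar_eq_zero hA2 hA (filtration_antitone (by norm_num) hu) hw
  rwa [QuadraticMap.polar, hQu, hQw, sub_zero, sub_zero] at this

theorem IsOrthogonalGrading.quadratic_add_eq_of_mem_filtration (horth : IsOrthogonalGrading B Vg)
    (hA2 : ∀ i, ∀ x ∈ Vg i, A x ∈ Vg (i + 2)) (hQ0 : ∀ i, i ≠ -1 → ∀ x ∈ Vg i, Q x = 0)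
    (hA : ∀ x y : M, Q (x + y) - Q x - Q y = B (A x) y) {u w : M}
    (hu : u ∈ filtration Vg (-1)) (hw : w ∈ filtration Vg 0) : Q (u + w) = Q u := by
  have hpolar := horth.polar_eq_zero hA2 hA hu hw
  rw [QuadraticMap.polar] at hpolar
  linear_combination hpolar + horth.quadratic_eq_zero_of_mem_filtration_zero hA2 hQ0 hA hw

end Bilinear

section Field

variable {k V : Type*} [Field k] [AddCommGroup V] [Module k V]
  {B : LinearMap.BilinForm k V} {Vg : ℤ → Submodule k V} {Q : QuadraticForm k V}
  {A : Module.End k V}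

theorem eq_zero_of_pow_two_mul_add_one_apply_eq_zero (hQ : QV20 k V Vg Q A)
    (hadj : LinearMap.IsAdjointPair B B ⇑(-A) ⇑A)
    (hA : ∀ x y : V, Q (x + y) - Q x - Q y = B (A x) y) {c : ℕ} {v : V}
    (hv : v ∈ Vg (-((2 * c + 1 : ℕ) : ℤ))) (hAv : (A ^ (2 * c + 1)) v = 0)
    (hQv : Q ((A ^ c) v) = 0) : v = 0 := by
  obtain ⟨hinj, hnondeg⟩ := hQ.2.2.2 (2 * c + 1) (odd_two_mul_add_one c)
  rw [show (2 * c + 1 - 1) / 2 = c by omega] at hinj hnondeg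
  refine hinj v hv (hnondeg _ ⟨v, hv, rfl⟩ ?_ hQv)
  rintro _ ⟨v', -, rfl⟩
  have hvanish : (A ^ c) (A ((A ^ c) v)) = 0 := by
    rw [← Module.End.mul_apply, ← Module.End.mul_apply, ← pow_succ, ← pow_add,
      show c + 1 + c = 2 * c + 1 by ring, hAv]
  rw [QuadraticMap.polar, hA, ← hadj.pow c, neg_pow, Module.End.mul_apply, hvanish, map_zero,
    map_zero, LinearMap.zero_apply]

theorem IsOrthogonalGrading.mem_filtration_neg_iff (horth : IsOrthogonalGrading B Vg)
    (hsep : B.SeparatingRight) (hint : DirectSum.IsInternal Vg) (halt : B.IsAlt)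
    (hA : ∀ x y : V, Q (x + y) - Q x - Q y = B (A x) y) (hQ : QV20 k V Vg Q A) (n : ℕ)
    {x : V} :
    x ∈ filtration Vg (-n) ↔ x ∈ filtration Vg (-n - 1) ∧
      (A ^ (n + 1)) x ∈ filtration Vg (n + 2) ∧ (Even n → Q ((A ^ (n / 2)) x) = 0) := by
  have hA2 := hQ.1
  have hQ0 := hQ.2.1
  constructor
  · intro hx
    refine ⟨filtration_antitone (by omega) hx, ?_, fun ⟨c, hc⟩ => ?_⟩
    · convert pow_apply_mem_filtration hA2 (n + 1) hx using 2; push_cast; ring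
    · have h := pow_apply_mem_filtration hA2 (n / 2) hx
      rw [show -(n : ℤ) + (n / 2 : ℕ) * 2 = 0 by omega] at h
      exact horth.quadratic_eq_zero_of_mem_filtration_zero hA2 hQ0 hA h
  rintro ⟨hx, hAx, hQx⟩
  obtain ⟨v, hv, y, hy, rfl⟩ := exists_eq_add_of_mem_filtration hx
  rw [sub_add_cancel] at hy
  suffices v = 0 by rwa [this, zero_add]
  have hAv : (A ^ (n + 1)) v = 0 := by
    refine horth.eq_zero_of_mem_filtration_succ hsep hint.submodule_iSup_eq_top
      (p := n + 1) ?_ ?_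
    · convert pow_apply_mem hA2 (n + 1) hv using 2; push_cast; ring
    · have hAy : (A ^ (n + 1)) y ∈ filtration Vg (n + 2) := by
        convert pow_apply_mem_filtration hA2 (n + 1) hy using 2; push_cast; ring
      rw [map_add] at hAx
      have h := sub_mem hAx hAy
      rwa [add_sub_cancel_right,
        show (n : ℤ) + 2 = ((n + 1 : ℕ) : ℤ) + 1 by push_cast; ring] at h
  rcases Nat.even_or_odd' n with ⟨c, rfl | rfl⟩
  · have hQv : Q ((A ^ c) v) = 0 := by
      have hu : (A ^ c) v ∈ filtration Vg (-1) := le_filtration le_rfl <| by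
        convert pow_apply_mem hA2 c hv using 2; push_cast; ring
      have hw : (A ^ c) y ∈ filtration Vg 0 := by
        convert pow_apply_mem_filtration hA2 c hy using 2; push_cast; ring
      rw [← horth.quadratic_add_eq_of_mem_filtration hA2 hQ0 hA hu hw, ← map_add]
      simpa using hQx (even_two_mul c)
    refine eq_zero_of_pow_two_mul_add_one_apply_eq_zero hQ
      (isAdjointPair_neg_of_polar_eq halt hA) hA (by convert hv using 2; push_cast; ring) hAv hQv
  · exact (hQ.2.2.1 (2 * c + 1 + 1) ⟨c + 1, by ring⟩).1 v
      (by convert hv using 2; push_cast; ring) hAv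

theorem IsOrthogonalGrading.map_filtration_neg_eq [FiniteDimensional k V]
    (horth : IsOrthogonalGrading B Vg) (hsep : B.SeparatingRight)
    (hint : DirectSum.IsInternal Vg) (halt : B.IsAlt)
    (hA : ∀ x y : V, Q (x + y) - Q x - Q y = B (A x) y) (hQ : QV20 k V Vg Q A)
    {g : V ≃ₗ[k] V} (hB : ∀ x y, B (g x) (g y) = B x y) (hfix : ∀ x, Q (g x) = Q x)
    (hcomm : Commute A (g : Module.End k V)) (n : ℕ)
    (h : (filtration Vg (-n - 1)).map g.toLinearMap = filtration Vg (-n - 1)) :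
    (filtration Vg (-n)).map g.toLinearMap = filtration Vg (-n) := by
  have hperp : (filtration Vg (n + 2)).map g.toLinearMap = filtration Vg (n + 2) := by
    rw [horth.filtration_eq_orthogonal hsep hint (b := -n - 1) (by ring)]
    exact LinearMap.BilinForm.map_orthogonal_eq_of_isometry hB h
  have hpow (m : ℕ) (x : V) : (A ^ m) (g x) = g ((A ^ m) x) :=
    LinearMap.congr_fun (hcomm.pow_left m).eq x
  refine g.map_eq_of_map_le ?_
  rintro _ ⟨x, hx, rfl⟩
  obtain ⟨hx1, hx2, hx3⟩ := (horth.mem_filtration_neg_iff hsep hint halt hA hQ n).mp hx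
  refine (horth.mem_filtration_neg_iff hsep hint halt hA hQ n).mpr
    ⟨h ▸ Submodule.mem_map_of_mem hx1, ?_, fun he => ?_⟩
  · rw [LinearEquiv.coe_coe, hpow]
    exact hperp ▸ Submodule.mem_map_of_mem hx2
  · rw [LinearEquiv.coe_coe, hpow, hfix]
    exact hx3 he

theorem IsOrthogonalGrading.map_filtration_eq_of_nonpos [FiniteDimensional k V]
    (horth : IsOrthogonalGrading B Vg) (hsep : B.SeparatingRight)
    (hint : DirectSum.IsInternal Vg) (halt : B.IsAlt)
    (hA : ∀ x y : V, Q (x + y) - Q x - Q y = B (A x) y) (hQ : QV20 k V Vg Q A)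
    {g : V ≃ₗ[k] V} (hB : ∀ x y, B (g x) (g y) = B x y) (hfix : ∀ x, Q (g x) = Q x)
    (hcomm : Commute A (g : Module.End k V)) {i : ℤ} (hi : i ≤ 0) :
    (filtration Vg i).map g.toLinearMap = filtration Vg i := by
  obtain ⟨m, hm⟩ := exists_filtration_eq_top hint.submodule_iSupIndep hint.submodule_iSup_eq_top
  refine Int.leInduction (m := min m i)
    (motive := fun j _ => j ≤ 0 → (filtration Vg j).map g.toLinearMap = filtration Vg j)
    (fun _ => ?_) (fun j _ ih hj => ?_) i (min_le_right _ _) hi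
  · rw [hm _ (min_le_left _ _), Submodule.map_top, LinearEquiv.range]
  · obtain ⟨n, rfl⟩ : ∃ n : ℕ, j = -n - 1 := ⟨(-j - 1).toNat, by omega⟩
    rw [sub_add_cancel]
    exact horth.map_filtration_neg_eq hsep hint halt hA hQ hB hfix hcomm n (ih (by omega))

end Field

end IntGrading

open IntGrading in
theorem symplectic_fixing_Q_preserves_filtration_general
    (k V : Type*) [Field k] [AddCommGroup V] [Module k V]
    [FiniteDimensional k V]
    (B : LinearMap.BilinForm k V) (halt : B.IsAlt) (hnd : B.Nondegenerate)
    (Vg : ℤ → Submodule k V) (hg : SGood k V B Vg)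
    (Q : QuadraticForm k V) (A : Module.End k V)
    (hA : ∀ x y : V, Q (x + y) - Q x - Q y = B (A x) y)
    (hQ : QV20 k V Vg Q A)
    (g : V ≃ₗ[k] V)
    (hsymp : ∀ x y : V, B (g x) (g y) = B x y)
    (hfix : ∀ x : V, Q (g x) = Q x) :
    ∀ i : ℤ, Submodule.map g.toLinearMap (⨆ j ≥ i, Vg j) = ⨆ j ≥ i, Vg j := by
  obtain ⟨hint, -, -, (horth : IsOrthogonalGrading B Vg)⟩ := hg
  have hcomm := commute_of_isometry_of_polar_eq hnd.1 hA hsymp hfix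
  have hneg {i : ℤ} (hi : i ≤ 0) :=
    horth.map_filtration_eq_of_nonpos hnd.2 hint halt hA hQ hsymp hfix hcomm hi
  intro i
  change (filtration Vg i).map g.toLinearMap = filtration Vg i
  rcases le_or_gt i 0 with hi | hi
  · exact hneg hi
  · rw [horth.filtration_eq_orthogonal hnd.2 hint (b := 1 - i) (by ring)]
    exact LinearMap.BilinForm.map_orthogonal_eq_of_isometry hsymp (hneg (by omega))

/-- char 2, `(V, B)` symplectic with `s`-good grading, `g ∈ Sp(V)`
a symplectic automorphism, and `Q ∈ Q(V)₂⁰` with `Q ∘ g = Q`.  Then `g`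
preserves the filtration: `g(V_{≥ i}) = V_{≥ i}` for all `i`. -/
theorem symplectic_fixing_Q_preserves_filtration
    (k V : Type*) [Field k] [CharP k 2] [AddCommGroup V] [Module k V]
    [FiniteDimensional k V]
    (B : LinearMap.BilinForm k V) (halt : B.IsAlt) (hnd : B.Nondegenerate)
    (Vg : ℤ → Submodule k V) (hg : SGood k V B Vg)
    (Q : QuadraticForm k V) (A : Module.End k V)
    (hA : ∀ x y : V, Q (x + y) - Q x - Q y = B (A x) y)
    (hQ : QV20 k V Vg Q A)
    (g : V ≃ₗ[k] V)
    (hsymp : ∀ x y : V, B (g x) (g y) = B x y)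
    (hfix : ∀ x : V, Q (g x) = Q x) :
    ∀ i : ℤ, Submodule.map g.toLinearMap (⨆ j ≥ i, Vg j) = ⨆ j ≥ i, Vg j :=
  symplectic_fixing_Q_preserves_filtration_general k V B halt hnd Vg hg Q A hA hQ g hsymp hfix
end
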